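/- Let R be an associative unital ℂ-algebra with a derivation D (write r' := D r), let x ∈ R be central with x' = 1, and let f, g, a ∈ R with a' = 0. Define the 2×2 matrices over R[λ] (λ a central indeterminate): A(λ) = [[2,0],[0,0]]λ² + [[0, −2f²+g−x],[−2, 0]]λ + [[−2f²+g, 2f³−gf+xf+a−1],[−2f, 2f²−g+x]] and B(λ) = [[1,0],[0,0]]λ + [[0, −f² + (1/2)g − (1/2)x],[−1, f]]. Then the zero-curvature equation ∂ₓA − ∂_λB + AB − BA = 0 holds identically in λ if and only if f' = −f² + g − (1/2)x and g' = 2fg + a. (The Jimbo–Miwa pair JM₂¹ is an isomonodromic Lax pair exactly for the non-abelian system P₂¹.) -/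

import Mathlib

/- STATEMENT 6: The Jimbo–Miwa pair JM₂¹ is an isomonodromic Lax pair exactly for the
non-abelian system P₂¹: the zero-curvature equation ∂ₓA − ∂_λB + AB − BA = 0 holds
identically in λ iff f' = −f² + g − (1/2)x and g' = 2fg + a. -/

noncomputable section

variable (R : Type*) [Ring R] [Algebra ℂ R]

/-- The λ-dependent matrix `A(λ)` of the Jimbo–Miwa pair JM₂¹. -/
def JM21A (f g a x : R) (lam : ℂ) : Matrix (Fin 2) (Fin 2) R :=
  (lam ^ 2) • !![(2 : R), 0; 0, 0]
    + lam • !![(0 : R), -2 * f ^ 2 + g - x; -2, 0]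
    + !![-2 * f ^ 2 + g, 2 * f ^ 3 - g * f + x * f + a - 1;
         -2 * f, 2 * f ^ 2 - g + x]

/-- The λ-dependent matrix `B(λ)` of the Jimbo–Miwa pair JM₂¹. -/
def JM21B (f g x : R) (lam : ℂ) : Matrix (Fin 2) (Fin 2) R :=
  lam • !![(1 : R), 0; 0, 0]
    + !![(0 : R), -f ^ 2 + (1 / 2 : ℂ) • g - (1 / 2 : ℂ) • x; -1, f]

theorem JM21_zero_curvature_iff_P21
    (D : R →ₗ[ℂ] R) (hD : ∀ a b : R, D (a * b) = D a * b + a * D b)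
    (x : R) (hx : ∀ r : R, x * r = r * x) (hx1 : D x = 1)
    (f g a : R) (ha : D a = 0) :
    (∀ lam : ℂ,
        (JM21A R f g a x lam).map ⇑D - !![(1 : R), 0; 0, 0]
          + JM21A R f g a x lam * JM21B R f g x lam
          - JM21B R f g x lam * JM21A R f g a x lam = 0)
      ↔ (D f = -f ^ 2 + g - (1 / 2 : ℂ) • x ∧
          D g = 2 * f * g + a) := by
  have h1 : D 1 = 0 := by
    have h := hD 1 1; simp only [one_mul, mul_one] at h; exact left_eq_add.mp h
  have h2 : D 2 = 0 := by
    have : (2:R) = 1 + 1 := by norm_num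
    rw [this, map_add, h1, add_zero]
  have hf2 : D (f ^ 2) = D f * f + f * D f := by rw [pow_two, hD]
  have hf3 : D (f ^ 3) = D (f ^ 2) * f + f ^ 2 * D f := by rw [pow_succ, hD]
  have htl : ∀ r : R, 2 * r = (2:ℂ) • r := by intro r; rw [two_smul, two_mul]
  have htr : ∀ r : R, r * 2 = (2:ℂ) • r := by intro r; rw [two_smul, mul_two]
  constructor
  · intro h
    have e10 := congrFun (congrFun (h 0) 1) 0
    have e00 := congrFun (congrFun (h 0) 0) 0
    simp only [JM21A, JM21B] at e10 e00
    simp [Matrix.mul_apply, Fin.sum_univ_two, hD, h2, hf2] at e10 e00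
    simp only [mul_add, add_mul, mul_sub, sub_mul, neg_mul, mul_neg, neg_add, neg_sub, neg_neg,
        mul_assoc, smul_mul_assoc, mul_smul_comm, smul_smul, smul_add, smul_sub, smul_neg,
        htl, htr, hx, mul_one, one_mul, pow_succ, pow_zero, pow_one] at e10 e00
    have hf : D f = -f ^ 2 + g - (1 / 2 : ℂ) • x := by
      linear_combination (norm := (simp only [mul_add, add_mul, mul_sub, sub_mul, neg_mul, mul_neg,
        mul_assoc, smul_mul_assoc, mul_smul_comm, smul_smul, smul_add, smul_sub, smul_neg,
        htl, htr, hx, mul_one, one_mul, pow_succ, pow_zero, pow_one]; module)) (-1/2 : ℂ) • e10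
    refine ⟨hf, ?_⟩
    rw [hf] at e00
    linear_combination (norm := (simp only [mul_add, add_mul, mul_sub, sub_mul, neg_mul, mul_neg,
        mul_assoc, smul_mul_assoc, mul_smul_comm, smul_smul, smul_add, smul_sub, smul_neg,
        htl, htr, hx, mul_one, one_mul, pow_succ, pow_zero, pow_one]; module)) e00
  · rintro ⟨hf, hg⟩ lam
    ext i j
    fin_cases i <;> fin_cases j <;>
      simp [JM21A, JM21B, Matrix.mul_apply, Fin.sum_univ_two, hD, h1, h2, hf2, hf3, hf, hg, ha,
        hx1] <;>
      simp only [mul_add, add_mul, mul_sub, sub_mul, neg_mul, mul_neg, neg_add, neg_sub, neg_neg,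
        mul_assoc, smul_mul_assoc, mul_smul_comm, smul_smul, smul_add, smul_sub, smul_neg,
        htl, htr, hx, mul_one, one_mul, pow_succ, pow_zero, pow_one] <;>
      module
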